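/- arXiv:2301.13273 — 6 statements merged into one kernel-verified Lean document; each statement's English description precedes it below -/
import Mathlib

section
/- Let n ≥ 1 and d ≥ 1 be integers, α ∈ (0,1/2] with αn ≥ 1, ρ > 0, let Σ be a positive semidefinite d×d real matrix, w, w* ∈ ℝ^d with D := ‖Σ^{1/2}(w−w*)‖ > 0, σ > 0, and let (x₁,z₁),…,(xₙ,zₙ) ∈ ℝ^d×ℝ with yᵢ := ⟨xᵢ,w*⟩ + zᵢ. Assume that for every subset T ⊆ {1,…,n} with |T| ≥ (1−2α)n one has |(1/|T|)·Σ_{i∈T} ⟨xᵢ, w−w*⟩² − D²| ≤ ρ·D² and |(1/|T|)·Σ_{i∈T} zᵢ² − σ²| ≤ ρ·σ². Then for every θ ≥ √(1 + 4ρ/α)·(D + σ), the number of indices i ∈ {1,…,n} with |⟨xᵢ,w⟩ − yᵢ| > θ is at most αn. -/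
open Finset Matrix

private lemma aux_bounds (c u v r : ℝ) (hc : 0 < c) (h : |1 / c * u - v| ≤ r) :
    u ≤ c * (v + r) ∧ c * (v - r) ≤ u := by
  rw [abs_le] at h
  obtain ⟨h1, h2⟩ := h
  have hu : u = c * (1 / c * u) := by field_simp
  constructor
  · rw [hu]
    exact mul_le_mul_of_nonneg_left (by linarith) hc.le
  · calc c * (v - r) ≤ c * (1 / c * u) := mul_le_mul_of_nonneg_left (by linarith) hc.le
      _ = u := by field_simp

set_option maxHeartbeats 1000000 in
/-- deterministic clipping-fraction lemma, Lemma 3 of the paper.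
If the residual clipping threshold `θ` is at least `√(1+4ρ/α)` times the sum of the
prediction error `D = ‖Σ^{1/2}(w - w*)‖` and the noise level `σ`, then at most an `α`
fraction of the data points have residual exceeding `θ`, provided the data satisfy the
stated resilience-type averaging conditions on all subsets containing at least a
`(1-2α)` fraction of the points. -/
theorem stmt_2 (n d : ℕ) (hn : 1 ≤ n) (hd : 1 ≤ d)
    (α : ℝ) (hα0 : 0 < α) (hα1 : α ≤ 1 / 2) (hαn : 1 ≤ α * n)
    (ρ : ℝ) (hρ : 0 < ρ)
    (S : Matrix (Fin d) (Fin d) ℝ) (hS : S.PosSemidef)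
    (w wstar : Fin d → ℝ)
    (D : ℝ) (hD : D = Real.sqrt ((w - wstar) ⬝ᵥ S.mulVec (w - wstar))) (hD0 : 0 < D)
    (σ : ℝ) (hσ : 0 < σ)
    (x : Fin n → Fin d → ℝ) (z : Fin n → ℝ) (y : Fin n → ℝ)
    (hy : ∀ i, y i = x i ⬝ᵥ wstar + z i)
    (hres : ∀ T : Finset (Fin n), (1 - 2 * α) * n ≤ (T.card : ℝ) →
      |(1 / (T.card : ℝ)) * ∑ i ∈ T, (x i ⬝ᵥ (w - wstar)) ^ 2 - D ^ 2| ≤ ρ * D ^ 2 ∧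
      |(1 / (T.card : ℝ)) * ∑ i ∈ T, (z i) ^ 2 - σ ^ 2| ≤ ρ * σ ^ 2)
    (θ : ℝ) (hθ : Real.sqrt (1 + 4 * ρ / α) * (D + σ) ≤ θ) :
    ((univ.filter (fun i => θ < |x i ⬝ᵥ w - y i|)).card : ℝ) ≤ α * n := by
  by_contra hcon
  push_neg at hcon
  set B := univ.filter (fun i : Fin n => θ < |x i ⬝ᵥ w - y i|) with hB
  set a : Fin n → ℝ := fun i => x i ⬝ᵥ (w - wstar) with ha
  have hr : ∀ i, x i ⬝ᵥ w - y i = a i - z i := by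
    intro i
    rw [hy i, ha]
    simp [dotProduct_sub]
    ring
  have hnR : (0 : ℝ) < (n : ℝ) := by exact_mod_cast hn
  have hαn0 : (0 : ℝ) < α * n := by positivity
  set k := ⌈α * (n : ℝ)⌉₊ with hk
  have hkα : (α * n : ℝ) ≤ (k : ℝ) := Nat.le_ceil _
  have hk2 : (k : ℝ) ≤ 2 * α * n := by
    have := Nat.ceil_lt_add_one hαn0.le
    linarith
  have hkB : k ≤ B.card := Nat.ceil_le.mpr hcon.le
  obtain ⟨T, hTB, hTcard⟩ := Finset.exists_subset_card_eq hkB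
  have hk1 : 1 ≤ (k : ℝ) := le_trans hαn hkα
  have hkn : k ≤ n := by
    have := Finset.card_le_univ T
    simpa [hTcard] using this
  have hhalf : α * (n : ℝ) ≤ (1 / 2) * n := mul_le_mul_of_nonneg_right hα1 hnR.le
  have hn2 : (2 : ℝ) ≤ (n : ℝ) := by linarith
  have hkltn : (k : ℝ) < (n : ℝ) := by
    have hc := Nat.ceil_lt_add_one hαn0.le
    linarith
  have hcompl : ((Tᶜ.card : ℕ) : ℝ) = (n : ℝ) - (k : ℝ) := by
    rw [Finset.card_compl, Fintype.card_fin, hTcard, Nat.cast_sub hkn]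
  have hTc_ge : (1 - 2 * α) * n ≤ (Tᶜ.card : ℝ) := by
    rw [hcompl]; linarith
  have huniv_ge : (1 - 2 * α) * n ≤ ((univ : Finset (Fin n)).card : ℝ) := by
    simp only [Finset.card_univ, Fintype.card_fin]
    linarith
  have hucard : (((univ : Finset (Fin n)).card : ℕ) : ℝ) = (n : ℝ) := by
    simp
  obtain ⟨h1a, h1z⟩ := hres univ huniv_ge
  obtain ⟨h2a, h2z⟩ := hres Tᶜ hTc_ge
  rw [hucard] at h1a h1z
  rw [hcompl] at h2a h2z
  -- upper bounds on sums over univ, lower bounds over Tᶜ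
  have hnk0 : (0 : ℝ) < (n : ℝ) - (k : ℝ) := by linarith
  have hua := (aux_bounds _ _ _ _ hnR h1a).1
  have huz := (aux_bounds _ _ _ _ hnR h1z).1
  have hca := (aux_bounds _ _ _ _ hnk0 h2a).2
  have hcz := (aux_bounds _ _ _ _ hnk0 h2z).2
  set A := ∑ i ∈ T, a i ^ 2 with hA
  set Z := ∑ i ∈ T, z i ^ 2 with hZ
  have hsplitA : ∑ i ∈ Tᶜ, a i ^ 2 + A = ∑ i, a i ^ 2 :=
    Finset.sum_compl_add_sum T _
  have hsplitZ : ∑ i ∈ Tᶜ, z i ^ 2 + Z = ∑ i, z i ^ 2 :=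
    Finset.sum_compl_add_sum T _
  set K := (k : ℝ) + 2 * ρ * n with hK
  have hρn : (0 : ℝ) < 2 * ρ * n := by positivity
  have hK0 : 0 < K := by rw [hK]; linarith
  have hρkD : (0 : ℝ) ≤ ρ * (k : ℝ) * D ^ 2 := by positivity
  have hρkσ : (0 : ℝ) ≤ ρ * (k : ℝ) * σ ^ 2 := by positivity
  have hAle : A ≤ K * D ^ 2 := by rw [hK]; linarith
  have hZle : Z ≤ K * σ ^ 2 := by rw [hK]; linarith
  have hA0 : 0 ≤ A := Finset.sum_nonneg fun i _ => sq_nonneg _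
  have hZ0 : 0 ≤ Z := Finset.sum_nonneg fun i _ => sq_nonneg _
  -- Cauchy-Schwarz
  have hcs : (∑ i ∈ T, a i * z i) ^ 2 ≤ A * Z :=
    Finset.sum_mul_sq_le_sq_mul_sq T a z
  have hKDσ : (0 : ℝ) ≤ K * D * σ := by positivity
  have hprod : A * Z ≤ (K * D * σ) ^ 2 := by
    calc A * Z ≤ (K * D ^ 2) * (K * σ ^ 2) :=
          mul_le_mul hAle hZle hZ0 (by positivity)
      _ = (K * D * σ) ^ 2 := by ring
  have hcross : -(K * D * σ) ≤ ∑ i ∈ T, a i * z i :=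
    (abs_le_of_sq_le_sq' (le_trans hcs hprod) hKDσ).1
  -- expand residual sum
  have hexp : ∑ i ∈ T, (a i - z i) ^ 2 = A - 2 * (∑ i ∈ T, a i * z i) + Z := by
    rw [hA, hZ, Finset.mul_sum, ← Finset.sum_sub_distrib, ← Finset.sum_add_distrib]
    exact Finset.sum_congr rfl fun i _ => by ring
  have hub : ∑ i ∈ T, (a i - z i) ^ 2 ≤ K * (D + σ) ^ 2 := by
    rw [hexp]
    have : K * (D + σ) ^ 2 = K * D ^ 2 + 2 * (K * D * σ) + K * σ ^ 2 := by ring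
    rw [this]; linarith
  -- lower bound
  have hθ0 : 0 ≤ θ :=
    le_trans (mul_nonneg (Real.sqrt_nonneg _) (by linarith)) hθ
  have hTne : T.Nonempty := by
    rw [← Finset.card_pos, hTcard]
    exact_mod_cast lt_of_lt_of_le zero_lt_one hk1
  have hlb : (k : ℝ) * θ ^ 2 < ∑ i ∈ T, (a i - z i) ^ 2 := by
    have hsum : ∑ _i ∈ T, θ ^ 2 < ∑ i ∈ T, (a i - z i) ^ 2 := by
      apply Finset.sum_lt_sum_of_nonempty hTne
      intro i hiT
      have hiB := hTB hiT
      rw [hB, Finset.mem_filter] at hiB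
      have hlt : θ < |a i - z i| := by rw [← hr i]; exact hiB.2
      calc θ ^ 2 < |a i - z i| ^ 2 := by
            exact pow_lt_pow_left₀ hlt hθ0 (by norm_num)
        _ = (a i - z i) ^ 2 := sq_abs _
    simpa [Finset.sum_const, hTcard, nsmul_eq_mul] using hsum
  -- θ² lower bound
  have harg : (0 : ℝ) ≤ 1 + 4 * ρ / α := by
    have := div_nonneg (by linarith : (0:ℝ) ≤ 4 * ρ) hα0.le
    linarith
  have hθsq : (1 + 4 * ρ / α) * (D + σ) ^ 2 ≤ θ ^ 2 := by
    have h1 : (Real.sqrt (1 + 4 * ρ / α) * (D + σ)) ^ 2 ≤ θ ^ 2 := by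
      apply pow_le_pow_left₀ (mul_nonneg (Real.sqrt_nonneg _) (by linarith)) hθ
    rw [mul_pow, Real.sq_sqrt harg] at h1
    exact h1
  -- combine
  have hfinal : (k : ℝ) * ((1 + 4 * ρ / α) * (D + σ) ^ 2) < K * (D + σ) ^ 2 := by
    calc (k : ℝ) * ((1 + 4 * ρ / α) * (D + σ) ^ 2)
        ≤ (k : ℝ) * θ ^ 2 := mul_le_mul_of_nonneg_left hθsq (by linarith)
      _ < ∑ i ∈ T, (a i - z i) ^ 2 := hlb
      _ ≤ K * (D + σ) ^ 2 := hub
  have hDσ2 : (0 : ℝ) < (D + σ) ^ 2 := by positivity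
  have hdiv : (k : ℝ) * (1 + 4 * ρ / α) < K :=
    lt_of_mul_lt_mul_right (by linarith [hfinal] : (k : ℝ) * (1 + 4 * ρ / α) * (D + σ) ^ 2 < K * (D + σ) ^ 2) hDσ2.le
  have h4 : (k : ℝ) * (4 * ρ / α) < 2 * ρ * n := by
    rw [hK] at hdiv; linarith
  have h5 : (k : ℝ) * (4 * ρ / α) * α = 4 * ρ * k := by
    field_simp
  have h6 : (k : ℝ) * (4 * ρ / α) * α < 2 * ρ * n * α :=
    mul_lt_mul_of_pos_right h4 hα0
  rw [h5] at h6
  have h7 : ρ * (α * n) ≤ ρ * k := mul_le_mul_of_nonneg_left hkα hρ.le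
  have h8 : (0 : ℝ) < ρ * k := mul_pos hρ (by linarith)
  linarith
end

section
/- Let n ≥ 1 be an integer, ᾱ ∈ (0,1/10] with ᾱn ≥ 2, let G ⊆ {1,…,n} with |{1,…,n} \ G| ≤ 2ᾱn, let μ > 0, ρ ≥ 0, and let b₁,…,bₙ be nonnegative reals. Assume that for every subset T ⊆ G with |T| ≥ (1−6ᾱ)n one has |(1/|T|)·Σ_{i∈T} bᵢ − μ| ≤ ρ·μ. Let ψ denote the m-th smallest value among b₁,…,bₙ, where m = ⌈(1−3ᾱ)n⌉, and set φ = (1/n)·Σ_{i=1}^n bᵢ·1[bᵢ ≤ ψ]. Then |φ − μ| ≤ (9ρ + 12ᾱ)·μ. -/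
open Finset

set_option maxHeartbeats 1000000 in
/-- deterministic trimmed-mean estimate behind the robust private
distance estimator. Here `ψ` is the `m`-th smallest value among `b 0, …, b (n-1)`
(with `m = ⌈(1-3ᾱ)n⌉`), characterized exactly by: fewer than `m` of the values are
`< ψ` and at least `m` of the values are `≤ ψ`.  The trimmed mean
`φ = (1/n)·∑ᵢ bᵢ·1[bᵢ ≤ ψ]` approximates `μ` up to a multiplicative `(9ρ + 12ᾱ)` error. -/
theorem stmt_3 (n : ℕ) (hn : 1 ≤ n)
    (abar : ℝ) (habar0 : 0 < abar) (habar1 : abar ≤ 1 / 10) (habarn : 2 ≤ abar * n)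
    (G : Finset (Fin n)) (hG : ((univ \ G).card : ℝ) ≤ 2 * abar * n)
    (μ ρ : ℝ) (hμ : 0 < μ) (hρ : 0 ≤ ρ)
    (b : Fin n → ℝ) (hb : ∀ i, 0 ≤ b i)
    (hres : ∀ T ⊆ G, (1 - 6 * abar) * n ≤ (T.card : ℝ) →
      |(1 / (T.card : ℝ)) * ∑ i ∈ T, b i - μ| ≤ ρ * μ)
    (m : ℕ) (hm : m = ⌈(1 - 3 * abar) * n⌉₊)
    (ψ : ℝ)
    (hψ₁ : (univ.filter (fun i => b i < ψ)).card < m)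
    (hψ₂ : m ≤ (univ.filter (fun i => b i ≤ ψ)).card)
    (φ : ℝ) (hφ : φ = (1 / (n : ℝ)) * ∑ i, if b i ≤ ψ then b i else 0) :
    |φ - μ| ≤ (9 * ρ + 12 * abar) * μ := by
  have hN1 : (1:ℝ) ≤ (n:ℝ) := by exact_mod_cast hn
  have hNpos : (0:ℝ) < (n:ℝ) := by linarith
  -- two-sided bounds from the resilience hypothesis
  have key : ∀ T ⊆ G, (1 - 6 * abar) * n ≤ (T.card : ℝ) →
      (1 - ρ) * μ * T.card ≤ ∑ i ∈ T, b i ∧ (∑ i ∈ T, b i) ≤ (1 + ρ) * μ * T.card := by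
    intro T hT hc
    have hp10 : abar * (n:ℝ) ≤ (1/10) * n := mul_le_mul_of_nonneg_right habar1 (by linarith)
    have hcpos : (0:ℝ) < T.card := by linarith
    have h := hres T hT hc
    rw [abs_le] at h
    have h1 := mul_le_mul_of_nonneg_right h.1 hcpos.le
    have h2 := mul_le_mul_of_nonneg_right h.2 hcpos.le
    have e : (1 / (T.card:ℝ) * ∑ i ∈ T, b i - μ) * (T.card:ℝ)
        = (∑ i ∈ T, b i) - μ * T.card := by
      field_simp
    rw [e] at h1 h2
    constructor
    · linarith
    · linarith
  set S := univ.filter (fun i : Fin n => b i ≤ ψ) with hSdef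
  set L := univ.filter (fun i : Fin n => b i < ψ) with hLdef
  clear_value S L
  -- m bounds
  have hm_ge : (1 - 3*abar) * n ≤ (m:ℝ) := by rw [hm]; exact Nat.le_ceil _
  have hp10 : abar * (n:ℝ) ≤ (1/10) * n := mul_le_mul_of_nonneg_right habar1 (by linarith)
  have hm_le : (m:ℝ) ≤ (1 - 3*abar) * n + 1 := by
    have h0 : (0:ℝ) ≤ (1 - 3*abar) * n := by linarith
    rw [hm]; exact (Nat.ceil_lt_add_one h0).le
  have hm1 : 1 ≤ m := by
    rw [hm]; rw [Nat.one_le_iff_ne_zero, ← Nat.pos_iff_ne_zero, Nat.ceil_pos]; linarith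
  -- ψ is nonnegative
  have hψ0 : 0 ≤ ψ := by
    by_contra hneg
    push_neg at hneg
    have hSempty : S = ∅ := by
      rw [hSdef]
      refine Finset.filter_eq_empty_iff.mpr ?_
      intro i _
      push_neg
      linarith [hb i]
    rw [hSempty] at hψ₂
    simp at hψ₂
    omega
  -- cardinality of G
  have hGn : ((univ \ G).card : ℕ) + G.card = n := by
    simpa using Finset.card_sdiff_add_card_eq_card (Finset.subset_univ G)
  have hGcard_lo : (n:ℝ) - 2*abar*n ≤ (G.card : ℝ) := by
    have : ((univ \ G).card : ℝ) + (G.card : ℝ) = n := by exact_mod_cast hGn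
    linarith
  have hGcard_hi : (G.card : ℝ) ≤ n := by
    have h := Finset.card_le_univ G
    rw [Fintype.card_fin] at h
    exact_mod_cast h
  -- S ∩ G cardinality
  have hSpl : (S ∩ G).card + (S \ G).card = S.card := Finset.card_inter_add_card_sdiff S G
  have hSdG : (S \ G).card ≤ (univ \ G).card :=
    Finset.card_le_card (Finset.sdiff_subset_sdiff (Finset.subset_univ S) (Finset.Subset.refl G))
  have hSdGR : ((S \ G).card : ℝ) ≤ 2*abar*n := le_trans (by exact_mod_cast hSdG) hG
  have hSm : (m:ℝ) ≤ (S.card : ℝ) := by exact_mod_cast hψ₂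
  have hSplR : ((S ∩ G).card : ℝ) + ((S \ G).card : ℝ) = (S.card : ℝ) := by exact_mod_cast hSpl
  have hSGcard : (1 - 5*abar) * n ≤ ((S ∩ G).card : ℝ) := by linarith
  have hSGn : ((S ∩ G).card : ℝ) ≤ n := by
    have h := Finset.card_le_univ (S ∩ G)
    rw [Fintype.card_fin] at h
    exact_mod_cast h
  have hSGbig : (1 - 6*abar)*n ≤ ((S ∩ G).card : ℝ) := by linarith
  obtain ⟨hSGlo, hSGhi⟩ := key (S ∩ G) Finset.inter_subset_right hSGbig
  -- bounds for G itself
  have hGbig : (1 - 6*abar)*n ≤ (G.card : ℝ) := by linarith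
  obtain ⟨hGlo, hGhi⟩ := key G (Finset.Subset.refl G) hGbig
  -- the upper tail set U
  set U := univ.filter (fun i : Fin n => ¬ b i < ψ) with hUdef
  clear_value U
  have hLU : L.card + U.card = n := by
    have h := Finset.card_filter_add_card_filter_not (s := (univ : Finset (Fin n)))
      (p := fun i => b i < ψ)
    rw [Finset.card_univ, Fintype.card_fin] at h
    rw [hLdef, hUdef]
    exact h
  have hLm : (L.card : ℝ) + 1 ≤ (m:ℝ) := by exact_mod_cast Nat.succ_le_of_lt hψ₁
  have hLUR : (L.card : ℝ) + (U.card : ℝ) = n := by exact_mod_cast hLU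
  have hUpl : (U ∩ G).card + (U \ G).card = U.card := Finset.card_inter_add_card_sdiff U G
  have hUplR : ((U ∩ G).card : ℝ) + ((U \ G).card : ℝ) = (U.card : ℝ) := by exact_mod_cast hUpl
  have hUdG : ((U \ G).card : ℝ) ≤ 2*abar*n := by
    refine le_trans ?_ hG
    exact_mod_cast Finset.card_le_card
      (Finset.sdiff_subset_sdiff (Finset.subset_univ U) (Finset.Subset.refl G))
  have hUGcard : abar * n ≤ ((U ∩ G).card : ℝ) := by linarith
  set k := ⌈abar * (n:ℝ)⌉₊ with hkdef
  clear_value k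
  have hkle : k ≤ (U ∩ G).card := by rw [hkdef]; exact Nat.ceil_le.mpr hUGcard
  have hk_lo : abar * n ≤ (k:ℝ) := by rw [hkdef]; exact Nat.le_ceil _
  have hk_hi : (k:ℝ) ≤ abar * n + 1 := by
    have h0 : (0:ℝ) ≤ abar * n := by positivity
    rw [hkdef]; exact (Nat.ceil_lt_add_one h0).le
  clear hkdef hm
  obtain ⟨D, hD, hDcard⟩ := Finset.exists_subset_card_eq hkle
  have hDG : D ⊆ G := hD.trans Finset.inter_subset_right
  have hGDcardR : ((G \ D).card : ℝ) = (G.card : ℝ) - k := by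
    rw [Finset.card_sdiff_of_subset hDG, hDcard]
    rw [Nat.cast_sub (le_trans (hDcard ▸ Finset.card_le_card hD)
      (Finset.card_le_card Finset.inter_subset_right))]
  have hGDbig : (1 - 6*abar)*n ≤ ((G \ D).card : ℝ) := by rw [hGDcardR]; linarith
  obtain ⟨hGDlo, _⟩ := key (G \ D) Finset.sdiff_subset hGDbig
  -- lower bound on the sum over D in terms of ψ
  have hDψ : ∀ i ∈ D, ψ ≤ b i := by
    intro i hi
    have := hD hi
    have hiU : i ∈ U := Finset.mem_of_mem_inter_left this
    rw [hUdef, Finset.mem_filter] at hiU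
    exact not_lt.mp hiU.2
  have hDsum : (k:ℝ) * ψ ≤ ∑ i ∈ D, b i := by
    have := Finset.card_nsmul_le_sum D b ψ hDψ
    rwa [hDcard, nsmul_eq_mul] at this
  have hGDsplit : (∑ i ∈ G \ D, b i) + ∑ i ∈ D, b i = ∑ i ∈ G, b i := Finset.sum_sdiff hDG
  -- upper bound on ψ
  have hψub : (k:ℝ) * ψ ≤ 2*ρ*μ*n + μ*k := by
    have h1 : (k:ℝ) * ψ ≤ (∑ i ∈ G, b i) - ∑ i ∈ G \ D, b i := by linarith
    have h2 : (∑ i ∈ G, b i) - (∑ i ∈ G \ D, b i)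
        ≤ (1+ρ)*μ*G.card - (1-ρ)*μ*((G.card:ℝ) - k) := by
      rw [← hGDcardR]; linarith
    have u1 : (0:ℝ) ≤ ρ * μ * ((n:ℝ) - G.card) :=
      mul_nonneg (mul_nonneg hρ hμ.le) (by linarith)
    have u2 : (0:ℝ) ≤ ρ * μ * (k:ℝ) := mul_nonneg (mul_nonneg hρ hμ.le) (Nat.cast_nonneg k)
    linarith [u1, u2]
  have htrim : 2*abar*(n:ℝ)*ψ ≤ (4*ρ + 3*abar)*μ*n := by
    have h2k : 2*abar*(n:ℝ)*ψ ≤ 2*(k:ℝ)*ψ := by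
      have u : (0:ℝ) ≤ ((k:ℝ) - abar * n) * ψ := mul_nonneg (sub_nonneg.mpr hk_lo) hψ0
      linarith [u]
    have h4 : 2*μ*(k:ℝ) ≤ 3*abar*μ*n := by
      have p1 : μ * 2 ≤ μ * (abar * n) := mul_le_mul_of_nonneg_left habarn hμ.le
      have p2 : μ * (k:ℝ) ≤ μ * (abar * n + 1) := mul_le_mul_of_nonneg_left hk_hi hμ.le
      linarith [p1, p2]
    linarith
  -- express φ
  have hφ' : (n:ℝ) * φ = ∑ i ∈ S, b i := by
    rw [hφ, hSdef, ← Finset.sum_filter]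
    field_simp
  have hsum_split : (∑ i ∈ S \ (S ∩ G), b i) + ∑ i ∈ S ∩ G, b i = ∑ i ∈ S, b i :=
    Finset.sum_sdiff Finset.inter_subset_left
  have hsdiff_eq : S \ (S ∩ G) = S \ G := Finset.sdiff_inter_self_left S G
  rw [hsdiff_eq] at hsum_split
  -- bound the sum over S \ G
  have hSdGsum_ub : ∑ i ∈ S \ G, b i ≤ 2*abar*(n:ℝ)*ψ := by
    have h1 : ∑ i ∈ S \ G, b i ≤ (S \ G).card • ψ := by
      refine Finset.sum_le_card_nsmul _ _ _ ?_
      intro i hi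
      have hiS : i ∈ S := (Finset.mem_sdiff.mp hi).1
      rw [hSdef, Finset.mem_filter] at hiS
      exact hiS.2
    rw [nsmul_eq_mul] at h1
    have h2 : ((S \ G).card : ℝ) * ψ ≤ 2*abar*n*ψ := mul_le_mul_of_nonneg_right hSdGR hψ0
    linarith
  have hSdGsum_lb : (0:ℝ) ≤ ∑ i ∈ S \ G, b i := Finset.sum_nonneg (fun i _ => hb i)
  -- upper bound on φ
  have hup : φ ≤ (1 + 5*ρ + 3*abar) * μ := by
    refine le_of_mul_le_mul_left ?_ hNpos
    have hnφ : (n:ℝ) * φ ≤ (1+ρ)*μ*n + (4*ρ + 3*abar)*μ*n := by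
      rw [hφ', ← hsum_split]
      have p : (0:ℝ) ≤ (1+ρ)*μ * ((n:ℝ) - ((S ∩ G).card : ℝ)) :=
        mul_nonneg (mul_nonneg (by linarith) hμ.le) (by linarith)
      linarith [p]
    linarith
  -- lower bound on φ
  have hlo : (1 - 9*ρ - 12*abar) * μ ≤ φ := by
    refine le_of_mul_le_mul_left ?_ hNpos
    have hnφ : (1 - 9*ρ - 12*abar)*μ*n ≤ (n:ℝ) * φ := by
      rw [hφ', ← hsum_split]
      have q2 : (0:ℝ) ≤ ρ * μ * n := mul_nonneg (mul_nonneg hρ hμ.le) hNpos.le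
      have q3 : (0:ℝ) ≤ abar * μ * n := mul_nonneg (mul_nonneg habar0.le hμ.le) hNpos.le
      rcases le_or_gt ρ 1 with hρ1 | hρ1
      · have q1 : (0:ℝ) ≤ (1 - ρ) * μ * (((S ∩ G).card : ℝ) - (1 - 5*abar)*n) :=
          mul_nonneg (mul_nonneg (by linarith) hμ.le) (by linarith)
        have q4 : (0:ℝ) ≤ abar * ρ * μ * n :=
          mul_nonneg (mul_nonneg (mul_nonneg habar0.le hρ) hμ.le) hNpos.le
        linarith [q1, q2, q3, q4, hSGlo, hSdGsum_lb]
      · have hpos : (0:ℝ) ≤ ∑ i ∈ S ∩ G, b i := Finset.sum_nonneg (fun i _ => hb i)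
        have r1 : (0:ℝ) ≤ (ρ - 1) * μ * n :=
          mul_nonneg (mul_nonneg (by linarith) hμ.le) hNpos.le
        have r2 : (0:ℝ) ≤ μ * n := mul_nonneg hμ.le hNpos.le
        linarith [hpos, hSdGsum_lb, r1, r2, q3]
    linarith
  rw [abs_le]
  have w1 : (0:ℝ) ≤ ρ * μ := mul_nonneg hρ hμ.le
  have w2 : (0:ℝ) ≤ abar * μ := mul_nonneg habar0.le hμ.le
  constructor
  · linarith [hlo]
  · linarith [hup, w1, w2]
end

section
/- Let n ≥ 1 be an integer, α ∈ (0,1/2] with αn ≥ 1, μ > 0, ρ > 0, and let a₁,…,aₙ be nonnegative reals. Assume that for every subset T ⊆ {1,…,n} with |T| ≥ (1−2α)n one has (1−ρ)μ ≤ (1/|T|)·Σ_{i∈T} aᵢ ≤ (1+ρ)μ. Then the number of indices i with aᵢ > (1 + 4ρ/α)·μ is at most αn/2. -/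
open Finset

set_option maxHeartbeats 1000000 in
/-- Markov-type quantile bound inside the clipping-fraction lemma.
If every subset containing at least a `(1-2α)` fraction of the `n` nonnegative values
has average within a `(1±ρ)` multiplicative factor of `μ`, then at most an `α/2`
fraction of the values exceed `(1 + 4ρ/α)·μ`. -/
theorem stmt_4 (n : ℕ) (hn : 1 ≤ n)
    (α : ℝ) (hα0 : 0 < α) (hα1 : α ≤ 1 / 2) (hαn : 1 ≤ α * n)
    (μ ρ : ℝ) (hμ : 0 < μ) (hρ : 0 < ρ)
    (a : Fin n → ℝ) (ha : ∀ i, 0 ≤ a i)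
    (havg : ∀ T : Finset (Fin n), (1 - 2 * α) * n ≤ (T.card : ℝ) →
      (1 - ρ) * μ ≤ (1 / (T.card : ℝ)) * ∑ i ∈ T, a i ∧
      (1 / (T.card : ℝ)) * ∑ i ∈ T, a i ≤ (1 + ρ) * μ) :
    (((univ.filter (fun i => (1 + 4 * ρ / α) * μ < a i)).card : ℝ)) ≤ α * n / 2 := by
  by_contra hcon
  push_neg at hcon
  set B := univ.filter (fun i => (1 + 4 * ρ / α) * μ < a i) with hB
  set k : ℕ := ⌊α * n / 2⌋₊ + 1 with hk
  have hαn2 : (0:ℝ) ≤ α * n / 2 := by positivity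
  have hk1 : k ≤ B.card := by
    have : ⌊α * n / 2⌋₊ < B.card := (Nat.floor_lt hαn2).mpr hcon
    omega
  have hkgt : α * n / 2 < (k : ℝ) := by
    have := Nat.lt_floor_add_one (α * n / 2)
    rw [hk]; push_cast
    exact this
  have hkle : (k : ℝ) ≤ 2 * α * n := by
    have h1 : (⌊α * n / 2⌋₊ : ℝ) ≤ α * n / 2 := Nat.floor_le hαn2
    rw [hk]; push_cast
    linarith
  have hkn : k ≤ n := hk1.trans (by
    have := card_le_univ B
    rwa [Fintype.card_fin] at this)
  obtain ⟨B', hB'sub, hB'card⟩ := Finset.exists_subset_card_eq hk1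
  set T := (univ : Finset (Fin n)) \ B' with hT
  have hTcard : T.card = n - k := by
    rw [hT, card_sdiff_of_subset (subset_univ B'), hB'card, card_univ, Fintype.card_fin]
  have hTcardR : (T.card : ℝ) = (n : ℝ) - k := by
    rw [hTcard]
    push_cast [Nat.cast_sub hkn]
    ring
  have hn0 : (0:ℝ) < n := by exact_mod_cast hn
  -- average over univ
  have hu := (havg univ (by
    rw [card_univ, Fintype.card_fin]
    nlinarith)).2
  rw [card_univ, Fintype.card_fin] at hu
  have hsumU : ∑ i, a i ≤ (1 + ρ) * μ * n := by
    have h2 : (1 / (n:ℝ)) * (∑ i, a i) * n = ∑ i, a i := by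
      field_simp
    nlinarith [mul_le_mul_of_nonneg_right hu hn0.le]
  -- average over T
  have hcondT : (1 - 2 * α) * n ≤ (T.card : ℝ) := by
    rw [hTcardR]; linarith
  have hsumT : (1 - ρ) * μ * ((n:ℝ) - k) ≤ ∑ i ∈ T, a i := by
    rcases lt_or_eq_of_le hkn with h | h
    · have hpos : (0:ℝ) < (n:ℝ) - k := by
        have : (k:ℝ) < n := by exact_mod_cast h
        linarith
      have hl := (havg T hcondT).1
      rw [hTcardR] at hl
      have h2 : (1 / ((n:ℝ) - k)) * (∑ i ∈ T, a i) * ((n:ℝ) - k) = ∑ i ∈ T, a i := by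
        field_simp
      nlinarith [mul_le_mul_of_nonneg_right hl hpos.le]
    · have : (n:ℝ) - k = 0 := by rw [h]; ring
      rw [this, mul_zero]
      exact Finset.sum_nonneg (fun i _ => ha i)
  -- sum over B'
  have hsumB' : (k : ℝ) * ((1 + 4 * ρ / α) * μ) ≤ ∑ i ∈ B', a i := by
    have h1 := Finset.card_nsmul_le_sum B' a ((1 + 4 * ρ / α) * μ)
      (fun i hi => by
        have := hB'sub hi
        rw [hB, mem_filter] at this
        exact this.2.le)
    rwa [hB'card, nsmul_eq_mul] at h1
  have hsplit : ∑ i ∈ T, a i + ∑ i ∈ B', a i = ∑ i, a i :=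
    Finset.sum_sdiff (subset_univ B')
  -- combine
  have hd : 4 * ρ / α * α = 4 * ρ := by field_simp
  have hkey : (1 - ρ) * μ * ((n:ℝ) - k) + (k:ℝ) * ((1 + 4 * ρ / α) * μ)
      ≤ (1 + ρ) * μ * n := by linarith
  -- multiply through by α, cancel ρ μ
  have e1 : (k:ℝ) * (4 * ρ / α) * μ ≤ 2 * ρ * μ * n - ρ * μ * k := by nlinarith [hkey]
  have hint1 := mul_le_mul_of_nonneg_right e1 hα0.le
  have ht2 : (k:ℝ) * (4 * ρ / α) * μ * α = (ρ * μ) * (4 * (k:ℝ)) := by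
    field_simp
  have e2 : (ρ * μ) * (4 * (k:ℝ)) ≤ (ρ * μ) * (α * (2 * n - k)) := by
    rw [← ht2]; linarith [hint1]
  have e3 : 4 * (k:ℝ) ≤ α * (2 * n - k) := le_of_mul_le_mul_left e2 (mul_pos hρ hμ)
  have hαk : 0 ≤ α * (k:ℝ) := mul_nonneg hα0.le (Nat.cast_nonneg k)
  nlinarith [e3, hkgt, hαk]
end

section
/- Let Σ be a positive definite d×d real matrix, let x₁,…,xₙ ∈ ℝ^d, let H ⊆ {1,…,n}, and let B ≥ 0 and θ ≥ 0. Assume that for every subset T ⊆ H and every v ∈ ℝ^d with ‖v‖ = 1 one has |(1/n)·Σ_{i∈T} ⟨v, Σ^{−1/2}xᵢ⟩| ≤ B. Then for all reals c₁,…,cₙ with |cᵢ| ≤ θ for every i ∈ H and cᵢ = 0 for every i ∉ H, it holds that ‖(1/n)·Σ_{i=1}^n cᵢ·Σ^{−1/2}xᵢ‖ ≤ 2Bθ. -/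
open Finset Matrix

/-- `Matrix.PosSemidef.sqrt` as defined in the older Mathlib (removed since), here for real matrices. -/
noncomputable def Matrix.PosSemidef.sqrt {n : Type*} [Fintype n] [DecidableEq n]
    {A : Matrix n n ℝ} (hA : A.PosSemidef) : Matrix n n ℝ :=
  hA.1.eigenvectorUnitary.1 * diagonal ((↑) ∘ (√·) ∘ hA.1.eigenvalues) *
    (star hA.1.eigenvectorUnitary : Matrix n n ℝ)

/-- Euclidean norm of a vector in `Fin d → ℝ`, written via the dot product. -/
noncomputable def vnorm {d : ℕ} (v : Fin d → ℝ) : ℝ := Real.sqrt (v ⬝ᵥ v)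

/-- bias of a bounded-weight combination of resilient whitened points.
If every subset `T ⊆ H` satisfies `|(1/n)·∑_{i∈T} ⟨v, Σ^{-1/2} xᵢ⟩| ≤ B` for all unit
vectors `v`, then any weighted average `(1/n)·∑ᵢ cᵢ·Σ^{-1/2}xᵢ` with `|cᵢ| ≤ θ` on `H`
and `cᵢ = 0` off `H` has Euclidean norm at most `2Bθ`. -/
theorem stmt_7 {d n : ℕ} (hn : 1 ≤ n)
    (S : Matrix (Fin d) (Fin d) ℝ) (hS : S.PosDef)
    (x : Fin n → Fin d → ℝ) (H : Finset (Fin n))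
    (B θ : ℝ) (hB : 0 ≤ B) (hθ : 0 ≤ θ)
    (hres : ∀ T ⊆ H, ∀ v : Fin d → ℝ, vnorm v = 1 →
      |(1 / (n : ℝ)) * ∑ i ∈ T, v ⬝ᵥ ((hS.posSemidef.sqrt)⁻¹.mulVec (x i))| ≤ B)
    (c : Fin n → ℝ) (hcH : ∀ i ∈ H, |c i| ≤ θ) (hc0 : ∀ i ∉ H, c i = 0) :
    vnorm ((1 / (n : ℝ)) • ∑ i, c i • ((hS.posSemidef.sqrt)⁻¹.mulVec (x i)))
      ≤ 2 * B * θ := by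
  set y : Fin n → Fin d → ℝ := fun i => (hS.posSemidef.sqrt)⁻¹.mulVec (x i) with hy
  set w : Fin d → ℝ := (1 / (n : ℝ)) • ∑ i, c i • y i with hw
  by_cases hw0 : w = 0
  · rw [hw0]
    have : vnorm (0 : Fin d → ℝ) = 0 := by
      simp [vnorm]
    rw [this]
    positivity
  · -- w ≠ 0
    have hww : 0 < w ⬝ᵥ w := by
      rcases Function.ne_iff.mp hw0 with ⟨j, hj⟩
      have hj' : w j ≠ 0 := hj
      have h1 : w j * w j ≤ w ⬝ᵥ w :=
        Finset.single_le_sum (f := fun k => w k * w k)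
          (fun k _ => mul_self_nonneg (w k)) (Finset.mem_univ j)
      exact lt_of_lt_of_le (mul_self_pos.mpr hj') h1
    set N : ℝ := Real.sqrt (w ⬝ᵥ w) with hN
    have hNpos : 0 < N := Real.sqrt_pos.mpr hww
    have hN2 : N * N = w ⬝ᵥ w := Real.mul_self_sqrt hww.le
    set v : Fin d → ℝ := N⁻¹ • w with hv
    have hvnorm : vnorm v = 1 := by
      have : v ⬝ᵥ v = 1 := by
        rw [hv, smul_dotProduct, dotProduct_smul, smul_eq_mul, smul_eq_mul, ← hN2]
        field_simp
      rw [vnorm, this, Real.sqrt_one]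
    have hvw : v ⬝ᵥ w = N := by
      rw [hv, smul_dotProduct, smul_eq_mul, ← hN2]
      field_simp
    -- goal: vnorm w ≤ 2Bθ, and vnorm w = N
    have hgoal : vnorm w = N := rfl
    rw [hgoal]
    -- expand v ⬝ᵥ w
    set a : Fin n → ℝ := fun i => v ⬝ᵥ y i with ha
    have hdsum : ∀ (s : Finset (Fin n)) (f : Fin n → Fin d → ℝ),
        v ⬝ᵥ ∑ i ∈ s, f i = ∑ i ∈ s, v ⬝ᵥ f i := by
      intro s f
      simp only [dotProduct, Finset.sum_apply, Finset.mul_sum]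
      exact Finset.sum_comm
    have hexp : v ⬝ᵥ w = (1 / (n : ℝ)) * ∑ i ∈ H, c i * a i := by
      rw [hw, dotProduct_smul, hdsum, smul_eq_mul]
      congr 1
      rw [← Finset.sum_subset (Finset.subset_univ H)]
      · exact Finset.sum_congr rfl (fun i _ => by rw [dotProduct_smul, smul_eq_mul])
      · intro i _ hi
        simp [hc0 i hi]
    -- split H by sign of a
    set T1 : Finset (Fin n) := H.filter (fun i => 0 ≤ a i) with hT1
    set T2 : Finset (Fin n) := H.filter (fun i => ¬ 0 ≤ a i) with hT2
    have hB1 := hres T1 (Finset.filter_subset _ _) v hvnorm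
    have hB2 := hres T2 (Finset.filter_subset _ _) v hvnorm
    have habs : (1 / (n : ℝ)) * ∑ i ∈ H, |a i| ≤ 2 * B := by
      have hsplit : ∑ i ∈ H, |a i| = (∑ i ∈ T1, a i) + (∑ i ∈ T2, (- a i)) := by
        rw [hT1, hT2, ← Finset.sum_filter_add_sum_filter_not H (fun i => 0 ≤ a i)]
        congr 1
        · exact Finset.sum_congr rfl (fun i hi => abs_of_nonneg (Finset.mem_filter.mp hi).2)
        · exact Finset.sum_congr rfl (fun i hi =>
            abs_of_neg (lt_of_not_ge (Finset.mem_filter.mp hi).2))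
      have hn' : (0:ℝ) < (1 / (n : ℝ)) := by
        have : (0:ℝ) < (n:ℝ) := by exact_mod_cast hn
        positivity
      have h1 : (1 / (n : ℝ)) * ∑ i ∈ T1, a i ≤ B := (le_abs_self _).trans hB1
      have h2 : (1 / (n : ℝ)) * ∑ i ∈ T2, (- a i) ≤ B := by
        have : (1 / (n : ℝ)) * ∑ i ∈ T2, (- a i)
            = - ((1 / (n : ℝ)) * ∑ i ∈ T2, a i) := by
          rw [Finset.sum_neg_distrib]; ring
        rw [this]
        exact (neg_le_abs _).trans hB2
      calc (1 / (n : ℝ)) * ∑ i ∈ H, |a i|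
          = (1 / (n : ℝ)) * ∑ i ∈ T1, a i + (1 / (n : ℝ)) * ∑ i ∈ T2, (- a i) := by
            rw [hsplit]; ring
        _ ≤ B + B := add_le_add h1 h2
        _ = 2 * B := by ring
    -- N = v ⬝ᵥ w ≤ θ * (2B)
    have hca : ∀ i ∈ H, c i * a i ≤ θ * |a i| := by
      intro i hi
      calc c i * a i ≤ |c i * a i| := le_abs_self _
        _ = |c i| * |a i| := abs_mul _ _
        _ ≤ θ * |a i| := mul_le_mul_of_nonneg_right (hcH i hi) (abs_nonneg _)
    have : N ≤ θ * (2 * B) := by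
      rw [← hvw, hexp]
      have hn' : (0:ℝ) ≤ (1 / (n : ℝ)) := by positivity
      calc (1 / (n : ℝ)) * ∑ i ∈ H, c i * a i
          ≤ (1 / (n : ℝ)) * ∑ i ∈ H, θ * |a i| :=
            mul_le_mul_of_nonneg_left (Finset.sum_le_sum hca) hn'
        _ = θ * ((1 / (n : ℝ)) * ∑ i ∈ H, |a i|) := by
            rw [← Finset.mul_sum]; ring
        _ ≤ θ * (2 * B) := mul_le_mul_of_nonneg_left habs hθ
    linarith
end

section
/- Let x be a (K,a)-sub-Weibull random vector in ℝ^d with K > 0, a > 0 and E[‖x‖²] < ∞, and let Σ = E[xxᵀ]. Then for every ζ ∈ (0,1), with probability at least 1−ζ it holds that ‖x‖² ≤ K²·Tr(Σ)·(log(2d/ζ))^{2a}. -/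
open MeasureTheory Matrix

/-- A random vector `x` in `ℝ^d` is `(K,a)`-sub-Weibull if for every direction `v` whose
marginal second moment is positive and finite,
`E[exp((⟨v,x⟩²/(K²·E[⟨v,x⟩²]))^{1/(2a)})] ≤ 2`. -/
def IsSubWeibull {Ω : Type*} [MeasurableSpace Ω] (μ : Measure Ω) {d : ℕ}
    (x : Ω → Fin d → ℝ) (K a : ℝ) : Prop :=
  ∀ v : Fin d → ℝ,
    Integrable (fun ω => (v ⬝ᵥ x ω) ^ 2) μ →
    0 < ∫ ω, (v ⬝ᵥ x ω) ^ 2 ∂μ →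
    ∫⁻ ω, ENNReal.ofReal
        (Real.exp (((v ⬝ᵥ x ω) ^ 2 / (K ^ 2 * ∫ ω', (v ⬝ᵥ x ω') ^ 2 ∂μ)) ^ ((1 : ℝ) / (2 * a)))) ∂μ
      ≤ 2

/-- high-probability bound on the Euclidean norm of a sub-Weibull vector.
If `x` is `(K,a)`-sub-Weibull with `E[‖x‖²] < ∞` and covariance `Σ = E[xxᵀ]`, then with
probability at least `1-ζ`, `‖x‖² ≤ K²·Tr(Σ)·(log(2d/ζ))^{2a}`. -/
theorem stmt_11 {Ω : Type*} [MeasurableSpace Ω] (μ : Measure Ω) [IsProbabilityMeasure μ]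
    {d : ℕ} (hd : 1 ≤ d) (x : Ω → Fin d → ℝ) (hx : Measurable x)
    (K a : ℝ) (hK : 0 < K) (ha : 0 < a)
    (hsw : IsSubWeibull μ x K a)
    (hnorm : Integrable (fun ω => ∑ j, x ω j ^ 2) μ)
    (S : Matrix (Fin d) (Fin d) ℝ) (hS : ∀ j k, S j k = ∫ ω, x ω j * x ω k ∂μ)
    (ζ : ℝ) (hζ0 : 0 < ζ) (hζ1 : ζ < 1) :
    1 - ζ ≤ (μ {ω | ∑ j, x ω j ^ 2
        ≤ K ^ 2 * S.trace * Real.log (2 * d / ζ) ^ (2 * a)}).toReal := by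
  have hd0 : (0 : ℝ) < d := by exact_mod_cast hd
  have hR1 : (1 : ℝ) < 2 * d / ζ := by
    have hd1 : (1 : ℝ) ≤ d := by exact_mod_cast hd
    rw [lt_div_iff₀ hζ0]; nlinarith
  have hR0 : (0 : ℝ) < 2 * d / ζ := lt_trans one_pos hR1
  set L : ℝ := Real.log (2 * d / ζ) with hLdef
  have hL0 : 0 < L := Real.log_pos hR1
  have hxj : ∀ j, Measurable fun ω => x ω j :=
    fun j => (measurable_pi_apply j).comp hx
  -- integrability of each coordinate squared
  have hint : ∀ j, Integrable (fun ω => x ω j ^ 2) μ := by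
    intro j
    refine hnorm.mono' (((hxj j).pow_const 2).aestronglyMeasurable) ?_
    filter_upwards with ω
    rw [Real.norm_eq_abs, abs_of_nonneg (sq_nonneg _)]
    exact Finset.single_le_sum (fun k _ => sq_nonneg (x ω k)) (Finset.mem_univ j)
  have hSjj : ∀ j, S j j = ∫ ω, x ω j ^ 2 ∂μ := by
    intro j; rw [hS]; congr 1; funext ω; ring
  have hSnn : ∀ j, 0 ≤ S j j := by
    intro j; rw [hSjj]
    exact integral_nonneg fun ω => sq_nonneg _
  set c : Fin d → ℝ := fun j => K ^ 2 * S j j * L ^ (2 * a) with hc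
  -- the per-coordinate tail bound
  have hAj : ∀ j, μ {ω | c j < x ω j ^ 2} ≤ ENNReal.ofReal (ζ / d) := by
    intro j
    rcases eq_or_lt_of_le (hSnn j) with h0 | hpos
    · -- degenerate coordinate: x_j = 0 a.e.
      have hz : (fun ω => x ω j ^ 2) =ᵐ[μ] 0 := by
        rw [← integral_eq_zero_iff_of_nonneg (fun ω => sq_nonneg _) (hint j)]
        rw [← hSjj j, ← h0]
      have hz0 : μ {ω | x ω j ^ 2 ≠ 0} = 0 := by
        have := hz
        rw [Filter.EventuallyEq, ae_iff] at this
        simpa using this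
      have hcj : c j = 0 := by simp [hc, ← h0]
      have hnull : μ {ω | c j < x ω j ^ 2} = 0 := by
        refine measure_mono_null ?_ hz0
        intro ω hω
        simp only [Set.mem_setOf_eq] at hω ⊢
        rw [hcj] at hω
        exact ne_of_gt hω
      rw [hnull]
      exact zero_le
    · -- positive variance coordinate: apply sub-Weibull + Markov
      have hKS : 0 < K ^ 2 * S j j := by positivity
      have hIpos : 0 < ∫ ω, (Pi.single j 1 ⬝ᵥ x ω) ^ 2 ∂μ := by
        simp only [single_dotProduct, one_mul]
        rw [← hSjj j]; exact hpos
      have hIint : Integrable (fun ω => (Pi.single j 1 ⬝ᵥ x ω) ^ 2) μ := by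
        simp only [single_dotProduct, one_mul]
        exact hint j
      have key := hsw (Pi.single j 1) hIint hIpos
      simp only [single_dotProduct, one_mul] at key
      rw [← hSjj j] at key
      set f : Ω → ENNReal := fun ω =>
        ENNReal.ofReal (Real.exp ((x ω j ^ 2 / (K ^ 2 * S j j)) ^ ((1 : ℝ) / (2 * a)))) with hf
      have hfm : Measurable f :=
        ENNReal.measurable_ofReal.comp
          (Real.measurable_exp.comp
            ((Real.continuous_rpow_const (by positivity : (0:ℝ) ≤ 1 / (2 * a))).measurable.comp
              (((hxj j).pow_const 2).div_const _)))
      have hsub : {ω | c j < x ω j ^ 2} ⊆ {ω | ENNReal.ofReal (Real.exp L) ≤ f ω} := by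
        intro ω hω
        simp only [Set.mem_setOf_eq] at hω ⊢
        have h1 : L ^ (2 * a) ≤ x ω j ^ 2 / (K ^ 2 * S j j) := by
          rw [le_div_iff₀ hKS]
          have : K ^ 2 * S j j * L ^ (2 * a) < x ω j ^ 2 := hω
          linarith [this]
        have h2 : L ≤ (x ω j ^ 2 / (K ^ 2 * S j j)) ^ ((1 : ℝ) / (2 * a)) := by
          have heq : (L ^ (2 * a)) ^ ((1 : ℝ) / (2 * a)) = L := by
            rw [← Real.rpow_mul hL0.le]
            rw [mul_one_div, div_self (by positivity : (2 : ℝ) * a ≠ 0), Real.rpow_one]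
          calc L = (L ^ (2 * a)) ^ ((1 : ℝ) / (2 * a)) := heq.symm
            _ ≤ (x ω j ^ 2 / (K ^ 2 * S j j)) ^ ((1 : ℝ) / (2 * a)) :=
              Real.rpow_le_rpow (Real.rpow_nonneg hL0.le _) h1 (by positivity)
        exact ENNReal.ofReal_le_ofReal (Real.exp_le_exp.mpr h2)
      have hmarkov := mul_meas_ge_le_lintegral₀ (μ := μ) hfm.aemeasurable (ENNReal.ofReal (Real.exp L))
      have hchain : ENNReal.ofReal (Real.exp L) * μ {ω | c j < x ω j ^ 2} ≤ 2 := by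
        calc ENNReal.ofReal (Real.exp L) * μ {ω | c j < x ω j ^ 2}
            ≤ ENNReal.ofReal (Real.exp L) * μ {ω | ENNReal.ofReal (Real.exp L) ≤ f ω} :=
              mul_le_mul_right (measure_mono hsub) _
          _ ≤ ∫⁻ ω, f ω ∂μ := hmarkov
          _ ≤ 2 := key
      have hexpL : Real.exp L = 2 * d / ζ := Real.exp_log hR0
      have h2eq : (2 : ENNReal) = ENNReal.ofReal (Real.exp L) * ENNReal.ofReal (ζ / d) := by
        rw [← ENNReal.ofReal_mul (Real.exp_nonneg _), hexpL]
        rw [show 2 * (d : ℝ) / ζ * (ζ / d) = 2 by field_simp]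
        norm_num
      rw [h2eq] at hchain
      have hne0 : ENNReal.ofReal (Real.exp L) ≠ 0 := by
        simp [ENNReal.ofReal_eq_zero, not_le, Real.exp_pos]
      exact (ENNReal.mul_le_mul_iff_right hne0 ENNReal.ofReal_ne_top).mp hchain
  -- the target set and union bound
  set T := {ω | ∑ j, x ω j ^ 2 ≤ K ^ 2 * S.trace * L ^ (2 * a)} with hT
  have hsum_m : Measurable fun ω => ∑ j, x ω j ^ 2 :=
    Finset.measurable_sum _ fun j _ => (hxj j).pow_const 2
  have hTm : MeasurableSet T := measurableSet_le hsum_m measurable_const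
  have htrace : K ^ 2 * S.trace * L ^ (2 * a) = ∑ j, c j := by
    simp only [hc, Matrix.trace, Matrix.diag, Finset.mul_sum, Finset.sum_mul]
  have hcompl : Tᶜ ⊆ ⋃ j, {ω | c j < x ω j ^ 2} := by
    intro ω hω
    simp only [hT, Set.mem_compl_iff, Set.mem_setOf_eq, not_le] at hω
    by_contra h
    simp only [Set.mem_iUnion, Set.mem_setOf_eq, not_exists, not_lt] at h
    have : ∑ j, x ω j ^ 2 ≤ ∑ j, c j :=
      Finset.sum_le_sum fun j _ => h j
    rw [← htrace] at this
    linarith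
  have hU : μ Tᶜ ≤ ENNReal.ofReal ζ := by
    calc μ Tᶜ ≤ μ (⋃ j, {ω | c j < x ω j ^ 2}) := measure_mono hcompl
      _ ≤ ∑ j, μ {ω | c j < x ω j ^ 2} := measure_iUnion_fintype_le _ _
      _ ≤ ∑ _j : Fin d, ENNReal.ofReal (ζ / d) := Finset.sum_le_sum fun j _ => hAj j
      _ = (d : ENNReal) * ENNReal.ofReal (ζ / d) := by
          simp [Finset.sum_const, nsmul_eq_mul]
      _ = ENNReal.ofReal ζ := by
          rw [← ENNReal.ofReal_natCast d, ← ENNReal.ofReal_mul (by positivity)]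
          congr 1
          field_simp
  have h1 : (μ Tᶜ).toReal ≤ ζ := ENNReal.toReal_le_of_le_ofReal hζ0.le hU
  have h2 : (μ T).toReal + (μ Tᶜ).toReal = 1 := by
    have := measure_add_measure_compl (μ := μ) hTm
    have h3 : (μ T + μ Tᶜ).toReal = 1 := by rw [this]; simp
    rwa [ENNReal.toReal_add (measure_ne_top μ T) (measure_ne_top μ Tᶜ)] at h3
  linarith
end

section
/- Let x be a random vector in ℝ^d and z a real random variable on the same probability space (not necessarily independent), let K > 0 and a > 0, and suppose 0 < E[z²] < ∞ and E[exp((z² / (K²·E[z²]))^{1/(2a)})] ≤ 2. Let v ∈ ℝ^d with 0 < E[⟨v,x⟩²] < ∞ and E[exp((⟨v,x⟩² / (K²·E[⟨v,x⟩²]))^{1/(2a)})] ≤ 2. Then E[exp((z²·⟨v,x⟩² / (K⁴·E[z²]·E[⟨v,x⟩²]))^{1/(4a)})] ≤ 2. -/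
open MeasureTheory Matrix

private lemma geom_le_arith (u w : ℝ) (hu : 0 ≤ u) (hw : 0 ≤ w) :
    Real.sqrt (u * w) ≤ (u + w) / 2 := by
  rw [Real.sqrt_mul hu]
  nlinarith [sq_nonneg (Real.sqrt u - Real.sqrt w), Real.sq_sqrt hu, Real.sq_sqrt hw,
    Real.sqrt_nonneg u, Real.sqrt_nonneg w]

/-- product of sub-Weibull variables is sub-Weibull.
If `z` is `(K,a)`-sub-Weibull and the marginal `⟨v,x⟩` is `(K,a)`-sub-Weibull
(no independence assumed), then the product marginal satisfies the `(K², 2a)`-sub-Weibull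
exponential moment bound. -/
theorem stmt_12 {Ω : Type*} [MeasurableSpace Ω] (μ : Measure Ω) [IsProbabilityMeasure μ]
    {d : ℕ} (x : Ω → Fin d → ℝ) (z : Ω → ℝ) (hx : Measurable x) (hz : Measurable z)
    (K a : ℝ) (hK : 0 < K) (ha : 0 < a)
    (hzint : Integrable (fun ω => z ω ^ 2) μ)
    (hzpos : 0 < ∫ ω, z ω ^ 2 ∂μ)
    (hzexp : ∫⁻ ω, ENNReal.ofReal
        (Real.exp ((z ω ^ 2 / (K ^ 2 * ∫ ω', z ω' ^ 2 ∂μ)) ^ ((1 : ℝ) / (2 * a)))) ∂μ ≤ 2)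
    (v : Fin d → ℝ)
    (hxint : Integrable (fun ω => (v ⬝ᵥ x ω) ^ 2) μ)
    (hxpos : 0 < ∫ ω, (v ⬝ᵥ x ω) ^ 2 ∂μ)
    (hxexp : ∫⁻ ω, ENNReal.ofReal
        (Real.exp (((v ⬝ᵥ x ω) ^ 2 / (K ^ 2 * ∫ ω', (v ⬝ᵥ x ω') ^ 2 ∂μ)) ^ ((1 : ℝ) / (2 * a)))) ∂μ
      ≤ 2) :
    ∫⁻ ω, ENNReal.ofReal
        (Real.exp ((z ω ^ 2 * (v ⬝ᵥ x ω) ^ 2 /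
            (K ^ 4 * (∫ ω', z ω' ^ 2 ∂μ) * ∫ ω', (v ⬝ᵥ x ω') ^ 2 ∂μ)) ^ ((1 : ℝ) / (4 * a)))) ∂μ
      ≤ 2 := by
  set Ez := ∫ ω', z ω' ^ 2 ∂μ with hEz
  set Ex := ∫ ω', (v ⬝ᵥ x ω') ^ 2 ∂μ with hEx
  have hdot : Measurable fun ω => v ⬝ᵥ x ω := by
    simp only [dotProduct]
    exact Finset.measurable_sum _ fun i _ => measurable_const.mul ((measurable_pi_apply i).comp hx)
  set f : Ω → ℝ := fun ω => (z ω ^ 2 / (K ^ 2 * Ez)) ^ ((1 : ℝ) / (2 * a)) with hf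
  set g : Ω → ℝ := fun ω => ((v ⬝ᵥ x ω) ^ 2 / (K ^ 2 * Ex)) ^ ((1 : ℝ) / (2 * a)) with hg
  have hmf : Measurable fun ω => ENNReal.ofReal (Real.exp (f ω)) := by
    rw [hf]; fun_prop
  have hmg : Measurable fun ω => ENNReal.ofReal (Real.exp (g ω)) := by
    rw [hg]; fun_prop
  have hKz : (0:ℝ) < K ^ 2 * Ez := by positivity
  have hKx : (0:ℝ) < K ^ 2 * Ex := by positivity
  -- pointwise bound
  have key : ∀ ω, Real.exp ((z ω ^ 2 * (v ⬝ᵥ x ω) ^ 2 / (K ^ 4 * Ez * Ex)) ^ ((1 : ℝ) / (4 * a)))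
      ≤ (Real.exp (f ω) + Real.exp (g ω)) / 2 := by
    intro ω
    set A := z ω ^ 2 / (K ^ 2 * Ez) with hA
    set B := (v ⬝ᵥ x ω) ^ 2 / (K ^ 2 * Ex) with hB
    have hA0 : 0 ≤ A := by positivity
    have hB0 : 0 ≤ B := by positivity
    have harg : z ω ^ 2 * (v ⬝ᵥ x ω) ^ 2 / (K ^ 4 * Ez * Ex) = A * B := by
      rw [hA, hB, div_mul_div_comm]
      congr 1
      ring
    have hfω : 0 ≤ f ω := Real.rpow_nonneg hA0 _
    have hgω : 0 ≤ g ω := Real.rpow_nonneg hB0 _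
    have hexp : (1 : ℝ) / (4 * a) = ((1 : ℝ) / (2 * a)) * (1 / 2) := by
      field_simp; ring
    have step1 : (A * B) ^ ((1 : ℝ) / (4 * a)) = Real.sqrt (f ω * g ω) := by
      rw [hexp, Real.rpow_mul (by positivity), Real.mul_rpow hA0 hB0,
        Real.sqrt_eq_rpow]
    have step2 : Real.sqrt (f ω * g ω) ≤ (f ω + g ω) / 2 := geom_le_arith _ _ hfω hgω
    have step3 : Real.exp ((f ω + g ω) / 2) ≤ (Real.exp (f ω) + Real.exp (g ω)) / 2 := by
      rw [Real.exp_half, Real.exp_add]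
      exact geom_le_arith _ _ (Real.exp_pos _).le (Real.exp_pos _).le
    calc Real.exp ((z ω ^ 2 * (v ⬝ᵥ x ω) ^ 2 / (K ^ 4 * Ez * Ex)) ^ ((1 : ℝ) / (4 * a)))
        = Real.exp (Real.sqrt (f ω * g ω)) := by rw [harg, step1]
      _ ≤ Real.exp ((f ω + g ω) / 2) := Real.exp_le_exp.mpr step2
      _ ≤ (Real.exp (f ω) + Real.exp (g ω)) / 2 := step3
  calc ∫⁻ ω, ENNReal.ofReal
        (Real.exp ((z ω ^ 2 * (v ⬝ᵥ x ω) ^ 2 / (K ^ 4 * Ez * Ex)) ^ ((1 : ℝ) / (4 * a)))) ∂μ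
      ≤ ∫⁻ ω, (ENNReal.ofReal (Real.exp (f ω)) + ENNReal.ofReal (Real.exp (g ω))) / 2 ∂μ := by
        refine lintegral_mono fun ω => ?_
        calc ENNReal.ofReal _ ≤ ENNReal.ofReal ((Real.exp (f ω) + Real.exp (g ω)) / 2) :=
              ENNReal.ofReal_le_ofReal (key ω)
          _ = (ENNReal.ofReal (Real.exp (f ω)) + ENNReal.ofReal (Real.exp (g ω))) / 2 := by
              rw [ENNReal.ofReal_div_of_pos two_pos,
                ENNReal.ofReal_add (Real.exp_pos _).le (Real.exp_pos _).le]
              norm_num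
    _ = ((∫⁻ ω, ENNReal.ofReal (Real.exp (f ω)) ∂μ)
          + ∫⁻ ω, ENNReal.ofReal (Real.exp (g ω)) ∂μ) / 2 := by
        simp only [div_eq_mul_inv]
        rw [lintegral_mul_const' _ _ (by simp), lintegral_add_left hmf]
    _ ≤ (((2 : ENNReal) + 2) / 2) := by
        gcongr <;> assumption
    _ = 2 := by
        rw [show ((2 : ENNReal) + 2) = 2 * 2 by ring]
        rw [mul_div_assoc, ENNReal.div_self (by norm_num) (by norm_num), mul_one]
end
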